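/- arXiv:2205.08649 — 3 statements merged into one kernel-verified Lean document; each statement's English description precedes it below -/
import Mathlib

section
/- Let 𝓕, 𝓕̃ be complex 2n×2n matrices with -1 not an eigenvalue of either, such that 1 + 𝓕̃𝓕 is invertible. Let κ = (1-𝓕)(1+𝓕)⁻¹, κ̃ = (1-𝓕̃)(1+𝓕̃)⁻¹, and κ̂ = κ̃κ. Then 1+κ̂ is invertible and the Cayley transform 𝓕̂ = (1+κ̂)⁻¹(1-κ̂) satisfies 𝓕̂ = (1+𝓕)(1+𝓕̃𝓕)⁻¹(1+𝓕̃) - 1. -/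
theorem stmt_6 (n : ℕ) (F Ft : Matrix (Fin (2*n)) (Fin (2*n)) ℂ)
    (hF : IsUnit (1 + F)) (hFt : IsUnit (1 + Ft)) (hFtF : IsUnit (1 + Ft * F))
    (κ κt κh : Matrix (Fin (2*n)) (Fin (2*n)) ℂ)
    (hκ : κ = (1 - F) * (1 + F)⁻¹) (hκt : κt = (1 - Ft) * (1 + Ft)⁻¹)
    (hκh : κh = κt * κ) :
    IsUnit (1 + κh) ∧
    (1 + κh)⁻¹ * (1 - κh) = (1 + F) * (1 + Ft * F)⁻¹ * (1 + Ft) - 1 := by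
  have ha1 : (1 + F) * (1 + F)⁻¹ = 1 :=
    Matrix.mul_nonsing_inv _ ((Matrix.isUnit_iff_isUnit_det _).mp hF)
  have ha2 : (1 + F)⁻¹ * (1 + F) = 1 :=
    Matrix.nonsing_inv_mul _ ((Matrix.isUnit_iff_isUnit_det _).mp hF)
  have hb1 : (1 + Ft) * (1 + Ft)⁻¹ = 1 :=
    Matrix.mul_nonsing_inv _ ((Matrix.isUnit_iff_isUnit_det _).mp hFt)
  have hb2 : (1 + Ft)⁻¹ * (1 + Ft) = 1 :=
    Matrix.nonsing_inv_mul _ ((Matrix.isUnit_iff_isUnit_det _).mp hFt)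
  have hc1 : (1 + Ft * F) * (1 + Ft * F)⁻¹ = 1 :=
    Matrix.mul_nonsing_inv _ ((Matrix.isUnit_iff_isUnit_det _).mp hFtF)
  have hc2 : (1 + Ft * F)⁻¹ * (1 + Ft * F) = 1 :=
    Matrix.nonsing_inv_mul _ ((Matrix.isUnit_iff_isUnit_det _).mp hFtF)
  have hbκt : (1 + Ft) * κt = 1 - Ft := by
    rw [hκt, ← mul_assoc]
    have h : (1 + Ft) * (1 - Ft) = (1 - Ft) * (1 + Ft) := by noncomm_ring
    rw [h, mul_assoc, hb1, mul_one]
  have hκa : κ * (1 + F) = 1 - F := by rw [hκ, mul_assoc, ha2, mul_one]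
  have E1 : (1 + Ft) * (1 + κh) * (1 + F) = (2:ℂ) • (1 + Ft * F) := by
    rw [hκh]
    calc (1 + Ft) * (1 + κt * κ) * (1 + F)
        = (1 + Ft) * (1 + F) + ((1 + Ft) * κt) * (κ * (1 + F)) := by noncomm_ring
      _ = (1 + Ft) * (1 + F) + (1 - Ft) * (1 - F) := by rw [hbκt, hκa]
      _ = (2:ℂ) • (1 + Ft * F) := by
          rw [two_smul]; noncomm_ring
  have E2 : (1 + Ft) * (1 - κh) * (1 + F) = (2:ℂ) • (F + Ft) := by
    rw [hκh]
    calc (1 + Ft) * (1 - κt * κ) * (1 + F)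
        = (1 + Ft) * (1 + F) - ((1 + Ft) * κt) * (κ * (1 + F)) := by noncomm_ring
      _ = (1 + Ft) * (1 + F) - (1 - Ft) * (1 - F) := by rw [hbκt, hκa]
      _ = (2:ℂ) • (F + Ft) := by rw [two_smul]; noncomm_ring
  -- express 1 + κh and 1 - κh
  have hκh1 : 1 + κh = (1 + Ft)⁻¹ * ((2:ℂ) • (1 + Ft * F)) * (1 + F)⁻¹ := by
    have := congrArg (fun M => (1 + Ft)⁻¹ * M * (1 + F)⁻¹) E1
    rw [← this]
    rw [show (1 + Ft)⁻¹ * ((1 + Ft) * (1 + κh) * (1 + F)) * (1 + F)⁻¹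
        = ((1 + Ft)⁻¹ * (1 + Ft)) * (1 + κh) * ((1 + F) * (1 + F)⁻¹) by
      noncomm_ring, hb2, ha1, one_mul, mul_one]
  have hκh2 : 1 - κh = (1 + Ft)⁻¹ * ((2:ℂ) • (F + Ft)) * (1 + F)⁻¹ := by
    have := congrArg (fun M => (1 + Ft)⁻¹ * M * (1 + F)⁻¹) E2
    rw [← this]
    rw [show (1 + Ft)⁻¹ * ((1 + Ft) * (1 - κh) * (1 + F)) * (1 + F)⁻¹
        = ((1 + Ft)⁻¹ * (1 + Ft)) * (1 - κh) * ((1 + F) * (1 + F)⁻¹) by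
      noncomm_ring, hb2, ha1, one_mul, mul_one]
  set X : Matrix (Fin (2*n)) (Fin (2*n)) ℂ :=
    (1 + F) * ((2:ℂ)⁻¹ • (1 + Ft * F)⁻¹) * (1 + Ft) with hX
  have key1 : (1 + κh) * X = 1 := by
    rw [hκh1, hX]
    calc (1 + Ft)⁻¹ * ((2:ℂ) • (1 + Ft * F)) * (1 + F)⁻¹ *
          ((1 + F) * ((2:ℂ)⁻¹ • (1 + Ft * F)⁻¹) * (1 + Ft))
        = (1 + Ft)⁻¹ * (((2:ℂ) • (1 + Ft * F)) * (((1 + F)⁻¹ * (1 + F)) *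
            ((2:ℂ)⁻¹ • (1 + Ft * F)⁻¹)) * (1 + Ft)) := by noncomm_ring
      _ = 1 := by
          rw [ha2, one_mul, smul_mul_assoc, mul_smul_comm, smul_smul, hc1]
          norm_num [hb2]
  have key2 : X * (1 + κh) = 1 := by
    rw [hκh1, hX]
    calc (1 + F) * ((2:ℂ)⁻¹ • (1 + Ft * F)⁻¹) * (1 + Ft) *
          ((1 + Ft)⁻¹ * ((2:ℂ) • (1 + Ft * F)) * (1 + F)⁻¹)
        = (1 + F) * (((2:ℂ)⁻¹ • (1 + Ft * F)⁻¹) * (((1 + Ft) * (1 + Ft)⁻¹) *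
            ((2:ℂ) • (1 + Ft * F))) * (1 + F)⁻¹) := by noncomm_ring
      _ = 1 := by
          rw [hb1, one_mul, smul_mul_assoc, mul_smul_comm, smul_smul, hc2]
          norm_num [ha1]
  have hunit : IsUnit (1 + κh) := ⟨⟨1 + κh, X, key1, key2⟩, rfl⟩
  refine ⟨hunit, ?_⟩
  have hinv : (1 + κh)⁻¹ = X := Matrix.inv_eq_right_inv key1
  rw [hinv, hκh2, hX]
  -- now pure computation
  have lhs_eq : (1 + F) * ((2:ℂ)⁻¹ • (1 + Ft * F)⁻¹) * (1 + Ft) *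
      ((1 + Ft)⁻¹ * ((2:ℂ) • (F + Ft)) * (1 + F)⁻¹)
      = (1 + F) * (1 + Ft * F)⁻¹ * (F + Ft) * (1 + F)⁻¹ := by
    calc (1 + F) * ((2:ℂ)⁻¹ • (1 + Ft * F)⁻¹) * (1 + Ft) *
          ((1 + Ft)⁻¹ * ((2:ℂ) • (F + Ft)) * (1 + F)⁻¹)
        = (1 + F) * (((2:ℂ)⁻¹ • (1 + Ft * F)⁻¹) * (((1 + Ft) * (1 + Ft)⁻¹) *
            ((2:ℂ) • (F + Ft)))) * (1 + F)⁻¹ := by noncomm_ring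
      _ = (1 + F) * (1 + Ft * F)⁻¹ * (F + Ft) * (1 + F)⁻¹ := by
          rw [hb1, one_mul, smul_mul_smul_comm]
          norm_num [mul_assoc]
  rw [lhs_eq]
  -- show final identity by multiplying on the right by (1 + F)
  have cancel : ∀ A B : Matrix (Fin (2*n)) (Fin (2*n)) ℂ,
      A * (1 + F) = B * (1 + F) → A = B := by
    intro A B h
    have := congrArg (· * (1 + F)⁻¹) h
    simpa [mul_assoc, ha1] using this
  apply cancel
  have hba : (1 + Ft) * (1 + F) = (1 + Ft * F) + (F + Ft) := by noncomm_ring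
  calc (1 + F) * (1 + Ft * F)⁻¹ * (F + Ft) * (1 + F)⁻¹ * (1 + F)
      = (1 + F) * (1 + Ft * F)⁻¹ * (F + Ft) * ((1 + F)⁻¹ * (1 + F)) := by noncomm_ring
    _ = (1 + F) * (1 + Ft * F)⁻¹ * (F + Ft) := by rw [ha2, mul_one]
    _ = ((1 + F) * (1 + Ft * F)⁻¹ * (1 + Ft) - 1) * (1 + F) := by
        have hPc : (1 + F) * (1 + Ft * F)⁻¹ * (1 + Ft * F) = 1 + F := by
          rw [mul_assoc, hc2, mul_one]
        rw [sub_mul, one_mul, mul_assoc ((1 + F) * (1 + Ft * F)⁻¹) (1 + Ft) (1 + F), hba,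
          mul_add ((1 + F) * (1 + Ft * F)⁻¹) (1 + Ft * F) (F + Ft), hPc]
        abel
end

section
/- Let f(X,Y) be a holomorphic quadratic form on ℂ^N × ℂ^N with det f''_{XY} ≠ 0, and let g(Y) be a holomorphic quadratic form on ℂ^N such that the quadratic form Y ↦ f(0,Y) + g(Y) is non-degenerate. Define h(X) as the critical value of Y ↦ f(X,Y) + g(Y) (attained at the unique critical point, which is non-degenerate). Then the quadratic form X ↦ -f(X,0) + h(X) is non-degenerate, and for every Y ∈ ℂ^N, g(Y) equals the critical value of X ↦ -f(X,Y) + h(X). -/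
/-!
For symmetric invertible `A`, the critical point of `Y ↦ b ⬝ Y + Y ⬝ A Y` is the unique `Y` with
`A Y = -b / 2`, and there the value is `b ⬝ Y / 2`. With `b = Mᵀ X` and `A = Q + G` this makes `h`
the quadratic form of `H = P - ¼ M (Q + G)⁻¹ Mᵀ`, so `H - P = -¼ M (Q + G)⁻¹ Mᵀ` is invertible
together with `M`. In the reverse direction the critical point `X` of `-f(·, Y) + h` satisfies
`Mᵀ X = -2 (Q + G) Y`, so the critical value `-Y ⬝ Q Y - ½ Y ⬝ Mᵀ X` is `Y ⬝ G Y`.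
-/

open Matrix

namespace Matrix

variable {K n : Type*} [Field K] [Fintype n] [DecidableEq n]

omit [DecidableEq n] in
theorem dotProduct_mulVec_eq_transpose_mulVec_dotProduct (M : Matrix n n K) (X Y : n → K) :
    X ⬝ᵥ M *ᵥ Y = (Mᵀ *ᵥ X) ⬝ᵥ Y := by
  rw [dotProduct_mulVec, mulVec_transpose]

/-- The Schur complement of `Q + G` in the half-Hessian `[[P, M / 2], [Mᵀ / 2, Q + G]]` of
`(X, Y) ↦ X ⬝ P X + X ⬝ M Y + Y ⬝ (Q + G) Y`. -/
noncomputable def criticalValueMatrix (P Q G M : Matrix n n K) : Matrix n n K :=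
  P - (4⁻¹ : K) • (M * (Q + G)⁻¹ * Mᵀ)

variable {P Q G M : Matrix n n K}

theorem criticalValueMatrix_transpose (hP : Pᵀ = P) (hQ : Qᵀ = Q) (hG : Gᵀ = G) :
    (criticalValueMatrix P Q G M)ᵀ = criticalValueMatrix P Q G M := by
  rw [criticalValueMatrix, transpose_sub, transpose_smul, transpose_mul, transpose_mul,
    transpose_nonsing_inv, transpose_add, hQ, hG, transpose_transpose, ← Matrix.mul_assoc, hP]

variable [CharZero K]

theorem eq_of_add_two_smul_mulVec_eq_zero {A : Matrix n n K} (hA : IsUnit A) {b Y Y₀ : n → K}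
    (hY : b + (2 : K) • (A *ᵥ Y) = 0) (hY₀ : b + (2 : K) • (A *ᵥ Y₀) = 0) : Y = Y₀ := by
  have h2 : (2 : K) • (A *ᵥ Y) = (2 : K) • (A *ᵥ Y₀) := add_left_cancel (hY.trans hY₀.symm)
  exact mulVec_injective_iff_isUnit.mpr hA (smul_right_injective _ two_ne_zero h2)

theorem existsUnique_add_two_smul_mulVec_eq_zero_and {A : Matrix n n K} (hA : IsUnit A)
    {b Y₀ : n → K} (hY₀ : b + (2 : K) • (A *ᵥ Y₀) = 0) {p : (n → K) → Prop} (hp : p Y₀) :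
    ∃! Y, b + (2 : K) • (A *ᵥ Y) = 0 ∧ p Y :=
  ⟨Y₀, ⟨hY₀, hp⟩, fun _ hY => eq_of_add_two_smul_mulVec_eq_zero hA hY.1 hY₀⟩

omit [DecidableEq n] in
theorem dotProduct_add_dotProduct_mulVec_of_add_two_smul_mulVec_eq_zero {A : Matrix n n K}
    {b Y : n → K} (hY : b + (2 : K) • (A *ᵥ Y) = 0) :
    b ⬝ᵥ Y + Y ⬝ᵥ A *ᵥ Y = 2⁻¹ * (b ⬝ᵥ Y) := by
  have h : Y ⬝ᵥ (b + (2 : K) • (A *ᵥ Y)) = 0 := by rw [hY, dotProduct_zero]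
  rw [dotProduct_add, dotProduct_smul, smul_eq_mul, dotProduct_comm] at h
  linear_combination 2⁻¹ * h

theorem criticalValueMatrix_sub :
    criticalValueMatrix P Q G M - P = (-4⁻¹ : K) • (M * (Q + G)⁻¹ * Mᵀ) := by
  rw [criticalValueMatrix]
  module

theorem isUnit_criticalValueMatrix_sub (hM : IsUnit M) (hQG : IsUnit (Q + G)) :
    IsUnit (criticalValueMatrix P Q G M - P) := by
  have hB : IsUnit (M * (Q + G)⁻¹ * Mᵀ) :=
    (hM.mul (isUnit_nonsing_inv_iff.mpr hQG)).mul ((isUnit_transpose M).mpr hM)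
  rw [criticalValueMatrix_sub, isUnit_iff_isUnit_det, det_smul]
  exact ((isUnit_iff_ne_zero.mpr (by norm_num)).pow _).mul ((isUnit_iff_isUnit_det _).mp hB)

theorem existsUnique_criticalValueMatrix_eq_critical_value (hQG : IsUnit (Q + G)) (X : n → K) :
    ∃! Y, Mᵀ *ᵥ X + (2 : K) • ((Q + G) *ᵥ Y) = 0 ∧
      X ⬝ᵥ criticalValueMatrix P Q G M *ᵥ X =
        X ⬝ᵥ P *ᵥ X + X ⬝ᵥ M *ᵥ Y + Y ⬝ᵥ Q *ᵥ Y + Y ⬝ᵥ G *ᵥ Y := by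
  set Y₀ := (-2⁻¹ : K) • ((Q + G)⁻¹ *ᵥ (Mᵀ *ᵥ X)) with hY₀def
  have hY₀ : Mᵀ *ᵥ X + (2 : K) • ((Q + G) *ᵥ Y₀) = 0 := by
    rw [mulVec_smul, mulVec_mulVec, mul_nonsing_inv _ ((isUnit_iff_isUnit_det _).mp hQG),
      one_mulVec, smul_smul]
    norm_num
  refine existsUnique_add_two_smul_mulVec_eq_zero_and hQG hY₀ ?_
  have hval := dotProduct_add_dotProduct_mulVec_of_add_two_smul_mulVec_eq_zero hY₀
  have hlin : (Mᵀ *ᵥ X) ⬝ᵥ Y₀ = -2⁻¹ * (X ⬝ᵥ (M * (Q + G)⁻¹ * Mᵀ) *ᵥ X) := by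
    rw [← dotProduct_mulVec_eq_transpose_mulVec_dotProduct, hY₀def, mulVec_smul, dotProduct_smul,
      smul_eq_mul, mulVec_mulVec, mulVec_mulVec, Matrix.mul_assoc]
  rw [criticalValueMatrix, sub_mulVec, dotProduct_sub, smul_mulVec, dotProduct_smul, smul_eq_mul,
    dotProduct_mulVec_eq_transpose_mulVec_dotProduct M X]
  rw [add_mulVec, dotProduct_add] at hval
  linear_combination -hval - 2⁻¹ * hlin

theorem existsUnique_critical_value_inverse (hM : IsUnit M) (hQG : IsUnit (Q + G)) (Y : n → K) :
    ∃! X, (2 : K) • ((criticalValueMatrix P Q G M - P) *ᵥ X) - M *ᵥ Y = 0 ∧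
      Y ⬝ᵥ G *ᵥ Y = -(X ⬝ᵥ P *ᵥ X + X ⬝ᵥ M *ᵥ Y + Y ⬝ᵥ Q *ᵥ Y) +
        X ⬝ᵥ criticalValueMatrix P Q G M *ᵥ X := by
  have hMT : IsUnit Mᵀ.det := (isUnit_iff_isUnit_det _).mp ((isUnit_transpose M).mpr hM)
  set X₀ := (-2 : K) • ((Mᵀ)⁻¹ *ᵥ ((Q + G) *ᵥ Y))
  have hX₀ : Mᵀ *ᵥ X₀ = (-2 : K) • ((Q + G) *ᵥ Y) := by
    rw [mulVec_smul, mulVec_mulVec, mul_nonsing_inv _ hMT, one_mulVec]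
  have hcrit : -(M *ᵥ Y) + (2 : K) • ((criticalValueMatrix P Q G M - P) *ᵥ X₀) = 0 := by
    rw [criticalValueMatrix_sub, smul_mulVec, ← mulVec_mulVec, hX₀, mulVec_smul, mulVec_mulVec,
      Matrix.mul_assoc, nonsing_inv_mul _ ((isUnit_iff_isUnit_det _).mp hQG), Matrix.mul_one,
      smul_smul, smul_smul]
    norm_num
  have hval := dotProduct_add_dotProduct_mulVec_of_add_two_smul_mulVec_eq_zero hcrit
  rw [neg_dotProduct, dotProduct_comm (M *ᵥ Y), sub_mulVec, dotProduct_sub] at hval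
  have hlin : X₀ ⬝ᵥ M *ᵥ Y = -2 * (Y ⬝ᵥ Q *ᵥ Y + Y ⬝ᵥ G *ᵥ Y) := by
    rw [dotProduct_mulVec_eq_transpose_mulVec_dotProduct, hX₀, smul_dotProduct, smul_eq_mul,
      dotProduct_comm, add_mulVec, dotProduct_add]
  simpa only [neg_add_eq_sub] using
    existsUnique_add_two_smul_mulVec_eq_zero_and (isUnit_criticalValueMatrix_sub hM hQG) hcrit
      (p := fun X => Y ⬝ᵥ G *ᵥ Y = -(X ⬝ᵥ P *ᵥ X + X ⬝ᵥ M *ᵥ Y + Y ⬝ᵥ Q *ᵥ Y) +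
        X ⬝ᵥ criticalValueMatrix P Q G M *ᵥ X)
      (by linear_combination -hval + 2⁻¹ * hlin)

end Matrix

/-- Proposition on inversion of critical values of quadratic forms.
`f (X, Y) = X ⬝ P X + X ⬝ M Y + Y ⬝ Q Y` is a general holomorphic quadratic form on
`ℂ^N × ℂ^N` with `f''_{XY} = M`, and `g Y = Y ⬝ G Y`. -/
theorem stmt_12 (N : ℕ) (P Q G M : Matrix (Fin N) (Fin N) ℂ)
    (hP : Pᵀ = P) (hQ : Qᵀ = Q) (hG : Gᵀ = G)
    (hM : M.det ≠ 0)
    (f : (Fin N → ℂ) → (Fin N → ℂ) → ℂ)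
    (hf : ∀ X Y, f X Y = X ⬝ᵥ P.mulVec X + X ⬝ᵥ M.mulVec Y + Y ⬝ᵥ Q.mulVec Y)
    (g : (Fin N → ℂ) → ℂ) (hg : ∀ Y, g Y = Y ⬝ᵥ G.mulVec Y)
    -- non-degeneracy of Y ↦ f(0,Y) + g(Y), whose Hessian is 2(Q+G)
    (hQG : IsUnit (Q + G)) :
    ∃ (h : (Fin N → ℂ) → ℂ) (H : Matrix (Fin N) (Fin N) ℂ),
      -- h is a holomorphic quadratic form with (half-)Hessian matrix H
      Hᵀ = H ∧ (∀ X, h X = X ⬝ᵥ H.mulVec X) ∧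
      -- h X is the critical value of Y ↦ f X Y + g Y, attained at the unique
      -- critical point (where the Y-gradient Mᵀ X + 2 (Q + G) Y vanishes)
      (∀ X, ∃! Y : Fin N → ℂ,
        Mᵀ.mulVec X + (2 : ℂ) • (Q + G).mulVec Y = 0 ∧ h X = f X Y + g Y) ∧
      -- the quadratic form X ↦ -f(X,0) + h(X), with (half-)Hessian H - P,
      -- is non-degenerate
      IsUnit (H - P) ∧
      -- g Y is the critical value of X ↦ -f X Y + h X, attained at the unique
      -- critical point (where the X-gradient -(2 P X + M Y) + 2 H X vanishes)
      (∀ Y, ∃! X : Fin N → ℂ,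
        (2 : ℂ) • (H - P).mulVec X - M.mulVec Y = 0 ∧ g Y = -f X Y + h X) := by
  have hMu : IsUnit M := (isUnit_iff_isUnit_det M).mpr (isUnit_iff_ne_zero.mpr hM)
  simp only [hf, hg]
  exact ⟨fun X => X ⬝ᵥ criticalValueMatrix P Q G M *ᵥ X, criticalValueMatrix P Q G M,
    criticalValueMatrix_transpose hP hQ hG, fun _ => rfl,
    existsUnique_criticalValueMatrix_eq_critical_value hQG,
    isUnit_criticalValueMatrix_sub hMu hQG,
    existsUnique_critical_value_inverse hMu hQG⟩
end

section
/- Let γ, γ̃ ∈ ℂ with γ, γ̃ ≠ 0, and let A, Ã be complex symmetric n×n matrices with operator norms satisfying 4‖A‖ ≤ (1-|γ|²)/|γ|² and 4‖Ã‖ ≤ (1-|γ̃|²)/|γ̃|². Set γ̂ = γ̃γ and Â = Ã + γ̃⁻²A. Then 4‖Â‖ ≤ (1-|γ̂|²)/|γ̂|². -/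
open Matrix

theorem one_sub_mul_sq_div_mul_sq {K : Type*} [Field K] (s : K) {t : K} (ht : t ≠ 0) :
    (1 - (s * t) ^ 2) / (s * t) ^ 2 = (1 - s ^ 2) / s ^ 2 + (s ^ 2)⁻¹ * ((1 - t ^ 2) / t ^ 2) := by
  have htt : t ^ 2 * (t ^ 2)⁻¹ = 1 := mul_inv_cancel₀ (pow_ne_zero 2 ht)
  simp only [div_eq_mul_inv, mul_pow, mul_inv]
  linear_combination ((s ^ 2)⁻¹ - s ^ 2 * (s ^ 2)⁻¹) * htt

theorem four_mul_norm_add_inv_sq_smul_le {𝕜 E : Type*} [NormedField 𝕜]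
    [SeminormedAddCommGroup E] [NormedSpace 𝕜 E] {γ γt : 𝕜} (hγ : γ ≠ 0) {x y : E}
    (hx : 4 * ‖x‖ ≤ (1 - ‖γ‖ ^ 2) / ‖γ‖ ^ 2) (hy : 4 * ‖y‖ ≤ (1 - ‖γt‖ ^ 2) / ‖γt‖ ^ 2) :
    4 * ‖y + γt⁻¹ ^ 2 • x‖ ≤ (1 - ‖γt * γ‖ ^ 2) / ‖γt * γ‖ ^ 2 := by
  have hscaled : 4 * ‖γt⁻¹ ^ 2 • x‖ ≤ (‖γt‖ ^ 2)⁻¹ * ((1 - ‖γ‖ ^ 2) / ‖γ‖ ^ 2) := by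
    rw [norm_smul, norm_pow, norm_inv, inv_pow, mul_left_comm]
    gcongr
  calc 4 * ‖y + γt⁻¹ ^ 2 • x‖ ≤ 4 * ‖y‖ + 4 * ‖γt⁻¹ ^ 2 • x‖ := by
        linarith [norm_add_le y (γt⁻¹ ^ 2 • x)]
    _ ≤ (1 - ‖γt‖ ^ 2) / ‖γt‖ ^ 2 + (‖γt‖ ^ 2)⁻¹ * ((1 - ‖γ‖ ^ 2) / ‖γ‖ ^ 2) := add_le_add hy hscaled
    _ = (1 - ‖γt * γ‖ ^ 2) / ‖γt * γ‖ ^ 2 := by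
        rw [norm_mul, one_sub_mul_sq_div_mul_sq _ (norm_ne_zero_iff.mpr hγ)]

theorem stmt_15_general (n : ℕ) (γ γt : ℂ) (hγ : γ ≠ 0)
    (A At : Matrix (Fin n) (Fin n) ℂ)
    (hnA : 4 * ‖Matrix.toEuclideanCLM (𝕜 := ℂ) A‖ ≤ (1 - ‖γ‖ ^ 2) / ‖γ‖ ^ 2)
    (hnAt : 4 * ‖Matrix.toEuclideanCLM (𝕜 := ℂ) At‖ ≤ (1 - ‖γt‖ ^ 2) / ‖γt‖ ^ 2) :
    4 * ‖Matrix.toEuclideanCLM (𝕜 := ℂ) (At + γt⁻¹ ^ 2 • A)‖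
      ≤ (1 - ‖γt * γ‖ ^ 2) / ‖γt * γ‖ ^ 2 := by
  rw [map_add, map_smul]
  exact four_mul_norm_add_inv_sq_smul_le hγ hnA hnAt

theorem stmt_15 (n : ℕ) (γ γt : ℂ) (hγ : γ ≠ 0) (hγt : γt ≠ 0)
    (A At : Matrix (Fin n) (Fin n) ℂ) (hA : Aᵀ = A) (hAt : Atᵀ = At)
    (hnA : 4 * ‖Matrix.toEuclideanCLM (𝕜 := ℂ) A‖ ≤ (1 - ‖γ‖ ^ 2) / ‖γ‖ ^ 2)
    (hnAt : 4 * ‖Matrix.toEuclideanCLM (𝕜 := ℂ) At‖ ≤ (1 - ‖γt‖ ^ 2) / ‖γt‖ ^ 2) :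
    4 * ‖Matrix.toEuclideanCLM (𝕜 := ℂ) (At + γt⁻¹ ^ 2 • A)‖
      ≤ (1 - ‖γt * γ‖ ^ 2) / ‖γt * γ‖ ^ 2 :=
  stmt_15_general n γ γt hγ A At hnA hnAt
end
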